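/- arXiv:cs/0002002 — 5 statements merged into one kernel-verified Lean document; each statement's English description precedes it below -/
import Mathlib

section
/- If O is a monotone operator on the lattice of belief pairs that is symmetric, i.e., O(P,S) = (O1(P,S), O1(S,P)) for some function O1, then the least fixpoint of O is consistent (i.e., its second component is contained in its first component). -/
/-- The knowledge ordering on belief pairs. -/
def kle {A : Type*} (B1 B2 : Set A × Set A) : Prop :=
  B2.1 ⊆ B1.1 ∧ B1.2 ⊆ B2.2

/-- The least fixpoint of a monotone symmetric operator on belief pairs is consistent. -/
theorem least_fixpoint_symmetric_consistent (A : Type*)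
    (O : Set A × Set A → Set A × Set A)
    (O1 : Set A → Set A → Set A)
    (hmono : ∀ B1 B2, kle B1 B2 → kle (O B1) (O B2))
    (hsym : ∀ P S : Set A, O (P, S) = (O1 P S, O1 S P))
    (P S : Set A)
    (hfix : O (P, S) = (P, S))
    (hleast : ∀ B', O B' = B' → kle (P, S) B') :
    S ⊆ P := by
  have h1 : O1 P S = P := by
    have := (hsym P S).symm.trans hfix
    exact congrArg Prod.fst this
  have h2 : O1 S P = S := by
    have := (hsym P S).symm.trans hfix
    exact congrArg Prod.snd this
  have hswap : O (S, P) = (S, P) := by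
    rw [hsym S P, h2, h1]
  have := hleast (S, P) hswap
  exact this.1
end

section
/- Let O be a monotone symmetric operator on belief pairs with O(P,S) = (O1(P,S), O1(S,P)), and define O_st(S) = lfp(P ↦ O1(P,S)) in W with reverse-inclusion order. Then O_st is antimonotone: if S1 ⊑ S2 then O_st(S2) ⊑ O_st(S1). -/
/-- The stable operator `O_st`, sending `S` to the reverse-inclusion-least fixpoint of
`P ↦ O1 P S`, is antimonotone with respect to reverse inclusion: if `S1 ⊑ S2`
(i.e. `S2 ⊆ S1`) then `O_st S2 ⊑ O_st S1` (i.e. `O_st S1 ⊆ O_st S2`). -/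
theorem stable_operator_antimonotone (A : Type*)
    (O : Set A × Set A → Set A × Set A)
    (O1 : Set A → Set A → Set A)
    (hmono : ∀ B1 B2, kle B1 B2 → kle (O B1) (O B2))
    (hsym : ∀ P S : Set A, O (P, S) = (O1 P S, O1 S P))
    (Ost : Set A → Set A)
    (hOst : ∀ S : Set A, O1 (Ost S) S = Ost S ∧
      ∀ Q : Set A, O1 Q S = Q → Q ⊆ Ost S)
    (S1 S2 : Set A) (h : S2 ⊆ S1) :
    Ost S1 ⊆ Ost S2 := by
  -- O1 is monotone in its first argument
  have hP : ∀ P Q : Set A, P ⊆ Q → O1 P S2 ⊆ O1 Q S2 := by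
    intro P Q hpq
    have := hmono (Q, S2) (P, S2) ⟨hpq, subset_rfl⟩
    rw [hsym, hsym] at this
    exact this.1
  -- O1 is antitone in its second argument
  have hS : O1 (Ost S1) S1 ⊆ O1 (Ost S1) S2 := by
    have := hmono (Ost S1, S2) (Ost S1, S1) ⟨subset_rfl, h⟩
    rw [hsym, hsym] at this
    exact this.1
  set f : Set A →o Set A := ⟨fun P => O1 P S2, fun P Q hpq => hP P Q hpq⟩ with hf
  have hpost : Ost S1 ≤ f (Ost S1) := by
    have := (hOst S1).1
    calc Ost S1 = O1 (Ost S1) S1 := this.symm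
      _ ⊆ O1 (Ost S1) S2 := hS
  have h1 : Ost S1 ⊆ OrderHom.gfp f := OrderHom.le_gfp f hpost
  have h2 : OrderHom.gfp f ⊆ Ost S2 :=
    (hOst S2).2 _ (OrderHom.map_gfp f)
  exact h1.trans h2
end

section
/- If (P,S) is a consistent belief pair (S ⊆ P), then for every modal formula φ and interpretation I, if h((P,S),I)(φ) = true then h((S,P),I)(φ) = true; i.e., the conservative estimate never exceeds the liberal estimate, so no formula receives the inconsistent value. -/
/-- Modal propositional formulas: atoms, Boolean connectives, and the modal operator `K`. -/
inductive MF (At : Type) : Type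
  | atom : At → MF At
  | neg : MF At → MF At
  | conj : MF At → MF At → MF At
  | disj : MF At → MF At → MF At
  | box : MF At → MF At

/-- The belief-pair truth function `h((P,S),I)`. -/
def hb {At : Type} (P S : Set (At → Bool)) (I : At → Bool) : MF At → Prop
  | .atom p => I p = true
  | .neg φ => ¬ hb S P I φ
  | .conj φ ψ => hb P S I φ ∧ hb P S I ψ
  | .disj φ ψ => hb P S I φ ∨ hb P S I ψ
  | .box φ => ∀ J ∈ P, hb P S J φ

/-- For a consistent belief pair (`S ⊆ P`) the conservative estimate never exceeds the
liberal one: no formula gets the inconsistent value. -/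
theorem consistent_pair_no_inconsistent_value {At : Type}
    (P S : Set (At → Bool)) (hcons : S ⊆ P) (I : At → Bool) (φ : MF At) :
    hb P S I φ → hb S P I φ := by
  induction φ generalizing I with
  | atom p => exact id
  | neg φ ih => intro h hc; exact h (ih I hc)
  | conj φ ψ ihφ ihψ => rintro ⟨h1, h2⟩; exact ⟨ihφ I h1, ihψ I h2⟩
  | disj φ ψ ihφ ihψ => rintro (h | h); exacts [Or.inl (ihφ I h), Or.inr (ihψ I h)]
  | box φ ih => intro h J hJ; exact ih J (h J (hcons hJ))
end

section
/- The truth function h((P,S),I) is monotone in the knowledge ordering for positive estimation: if (P1,S1) ≼ (P2,S2) (i.e., P2 ⊆ P1 and S1 ⊆ S2), then for every modal formula φ and interpretation I, h((P1,S1),I)(φ) = true implies h((P2,S2),I)(φ) = true, and h((S1,P1),I)(φ) = true is implied by h((S2,P2),I)(φ) = true. -/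
/-- The truth function is monotone in the knowledge ordering:
if `(P1,S1) ≼ (P2,S2)` (i.e. `P2 ⊆ P1` and `S1 ⊆ S2`), increasing knowledge preserves the
conservative estimate and reflects the liberal one. -/
theorem truth_function_knowledge_monotone {At : Type}
    (P1 S1 P2 S2 : Set (At → Bool))
    (hP : P2 ⊆ P1) (hS : S1 ⊆ S2) (I : At → Bool) (φ : MF At) :
    (hb P1 S1 I φ → hb P2 S2 I φ) ∧ (hb S2 P2 I φ → hb S1 P1 I φ) := by
  induction φ generalizing I with
  | atom p => exact ⟨id, id⟩
  | neg φ ih => exact ⟨fun h h2 => h ((ih I).2 h2), fun h h2 => h ((ih I).1 h2)⟩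
  | conj φ ψ ihφ ihψ =>
    exact ⟨fun ⟨a, b⟩ => ⟨(ihφ I).1 a, (ihψ I).1 b⟩,
           fun ⟨a, b⟩ => ⟨(ihφ I).2 a, (ihψ I).2 b⟩⟩
  | disj φ ψ ihφ ihψ =>
    exact ⟨fun h => h.imp (ihφ I).1 (ihψ I).1, fun h => h.imp (ihφ I).2 (ihψ I).2⟩
  | box φ ih =>
    exact ⟨fun h J hJ => (ih J).1 (h J (hP hJ)),
           fun h J hJ => (ih J).2 (h J (hS hJ))⟩
end

section
/- Let Δ=(D,W) be a default theory and T = m(Δ) its Konolige translation, where each default (α : β1,...,βk / γ) is translated to Kα ∧ ¬K¬β1 ∧ ... ∧ ¬K¬βk → γ. Then for every belief pair (P,S), the default-logic operator and the autoepistemic operator coincide: E_Δ(P,S) = D_T(P,S). -/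
/-- Propositional formulas. -/
inductive PF (At : Type) : Type
  | atom : At → PF At
  | neg : PF At → PF At
  | conj : PF At → PF At → PF At
  | disj : PF At → PF At → PF At

/-- Classical evaluation of a propositional formula in an interpretation. -/
def evalP {At : Type} (I : At → Bool) : PF At → Prop
  | .atom p => I p = true
  | .neg φ => ¬ evalP I φ
  | .conj φ ψ => evalP I φ ∧ evalP I ψ
  | .disj φ ψ => evalP I φ ∨ evalP I ψ

/-- A default `(α : β1,...,βk / γ)`. -/
structure Defl (At : Type) where
  pre : PF At
  just : List (PF At)
  con : PF At

/-- The conservative truth value of a default with respect to a belief pair `(P,S)`. -/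
def HdDef {At : Type} (P S : Set (At → Bool)) (I : At → Bool) (d : Defl At) : Prop :=
  (∃ J ∈ S, ¬ evalP J d.pre) ∨
    (∃ β ∈ d.just, ∀ J ∈ P, ¬ evalP J β) ∨
    evalP I d.con

/-- The operator `E_Δ` on belief pairs for `Δ = (D,W)`. -/
def EDelta {At : Type} (D : Set (Defl At)) (W : Set (PF At))
    (B : Set (At → Bool) × Set (At → Bool)) :
    Set (At → Bool) × Set (At → Bool) :=
  ({I | (∀ d ∈ D, HdDef B.2 B.1 I d) ∧ ∀ φ ∈ W, evalP I φ},
   {I | (∀ d ∈ D, HdDef B.1 B.2 I d) ∧ ∀ φ ∈ W, evalP I φ})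

/-- The 4-valued operator `D_T` of autoepistemic logic on belief pairs. -/
def DT {At : Type} (T : Set (MF At)) (B : Set (At → Bool) × Set (At → Bool)) :
    Set (At → Bool) × Set (At → Bool) :=
  ({I | ∀ φ ∈ T, hb B.2 B.1 I φ}, {I | ∀ φ ∈ T, hb B.1 B.2 I φ})

/-- Embedding of propositional formulas into modal formulas. -/
def embed {At : Type} : PF At → MF At
  | .atom p => .atom p
  | .neg φ => .neg (embed φ)
  | .conj φ ψ => .conj (embed φ) (embed ψ)
  | .disj φ ψ => .disj (embed φ) (embed ψ)

/-- Konolige's translation of a default `(α : β1,...,βk / γ)`: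
`Kα ∧ ¬K¬β1 ∧ ... ∧ ¬K¬βk → γ`, written as a disjunction `¬(antecedent) ∨ γ`. -/
def konolige {At : Type} (d : Defl At) : MF At :=
  .disj
    (.neg (d.just.foldr (fun β acc => .conj (.neg (.box (.neg (embed β)))) acc)
      (.box (embed d.pre))))
    (embed d.con)

/-- Konolige's translation of a default theory `Δ = (D,W)`. -/
def mTrans {At : Type} (D : Set (Defl At)) (W : Set (PF At)) : Set (MF At) :=
  (embed '' W) ∪ (konolige '' D)

lemma hb_embed {At : Type} (φ : PF At) : ∀ (P S : Set (At → Bool)) (I : At → Bool),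
    hb P S I (embed φ) ↔ evalP I φ := by
  induction φ with
  | atom p => intro P S I; rfl
  | neg φ ih => intro P S I; simp [embed, hb, evalP, ih]
  | conj φ ψ ih1 ih2 => intro P S I; simp [embed, hb, evalP, ih1, ih2]
  | disj φ ψ ih1 ih2 => intro P S I; simp [embed, hb, evalP, ih1, ih2]

lemma hb_fold {At : Type} (l : List (PF At)) (pre : PF At)
    (P S : Set (At → Bool)) (I : At → Bool) :
    hb P S I (l.foldr (fun β acc => .conj (.neg (.box (.neg (embed β)))) acc)
      (.box (embed pre))) ↔
    ((∀ β ∈ l, ∃ J ∈ S, evalP J β) ∧ ∀ J ∈ P, evalP J pre) := by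
  induction l with
  | nil => simp [hb, hb_embed]
  | cons β l ih =>
    simp only [List.foldr_cons, hb, ih, hb_embed, List.mem_cons]
    constructor
    · rintro ⟨h1, h2, h3⟩
      push_neg at h1
      exact ⟨fun b hb => hb.elim (fun e => e ▸ h1) (h2 b), h3⟩
    · rintro ⟨h1, h3⟩
      refine ⟨?_, fun b hb => h1 b (Or.inr hb), h3⟩
      push_neg
      exact h1 β (Or.inl rfl)

lemma hb_konolige {At : Type} (d : Defl At) (P S : Set (At → Bool)) (I : At → Bool) :
    hb P S I (konolige d) ↔ HdDef P S I d := by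
  simp only [konolige, hb, hb_fold, hb_embed, HdDef]
  constructor
  · rintro (h | h)
    · by_cases hp : ∃ J ∈ S, ¬ evalP J d.pre
      · exact Or.inl hp
      · push_neg at hp
        refine Or.inr (Or.inl ?_)
        by_contra hj
        push_neg at hj
        exact h ⟨hj, hp⟩
    · exact Or.inr (Or.inr h)
  · rintro (⟨J, hJ, hn⟩ | ⟨β, hβ, hall⟩ | h)
    · exact Or.inl fun h2 => hn (h2.2 J hJ)
    · refine Or.inl fun h1 => ?_
      obtain ⟨J, hJ, hc⟩ := h1.1 β hβ
      exact hall J hJ hc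
    · exact Or.inr h

/-- Under Konolige's translation, the default-logic operator `E_Δ` coincides with the
autoepistemic operator `D_{m(Δ)}` on every belief pair. -/
theorem EDelta_eq_DT_konolige {At : Type}
    (D : Set (Defl At)) (W : Set (PF At))
    (B : Set (At → Bool) × Set (At → Bool)) :
    EDelta D W B = DT (mTrans D W) B := by
  have key : ∀ (P S : Set (At → Bool)) (I : At → Bool),
      ((∀ d ∈ D, HdDef P S I d) ∧ ∀ φ ∈ W, evalP I φ) ↔
      (∀ φ ∈ mTrans D W, hb P S I φ) := by
    intro P S I
    constructor
    · rintro ⟨hd, hw⟩ φ (⟨ψ, hψ, rfl⟩ | ⟨d, hdD, rfl⟩)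
      · exact (hb_embed ψ P S I).2 (hw ψ hψ)
      · exact (hb_konolige d P S I).2 (hd d hdD)
    · intro h
      refine ⟨fun d hd => (hb_konolige d P S I).1 (h _ (Or.inr ⟨d, hd, rfl⟩)),
        fun ψ hψ => (hb_embed ψ P S I).1 (h _ (Or.inl ⟨ψ, hψ, rfl⟩))⟩
  ext I
  · exact key B.2 B.1 I
  · exact key B.1 B.2 I
end
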